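/- For any family { f_i ∣ i ∈ I } of antitone functions D → L, (pointwise sup of f_i)^u = (pointwise sup of (f_i)^u)^u, where g^u(b) = inf { g(a) ∣ a ≪ b }. -/

import Mathlib

open Classical

variable {D D' L : Type*}

/-- `a` is way below `b`. -/
def WayBelow [Preorder D] (a b : D) : Prop :=
  ∀ S : Set D, S.Nonempty → DirectedOn (· ≤ ·) S → ∀ s : D, IsLUB S s → b ≤ s → ∃ c ∈ S, a ≤ c

/-- Directed-complete poset. -/
def IsDCPO (D : Type*) [Preorder D] : Prop :=
  ∀ S : Set D, S.Nonempty → DirectedOn (· ≤ ·) S → ∃ s : D, IsLUB S s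

/-- A domain: a continuous directed-complete poset. -/
def IsFuzzyDomain (D : Type*) [Preorder D] : Prop :=
  IsDCPO D ∧ ∀ b : D, DirectedOn (· ≤ ·) {a | WayBelow a b} ∧ IsLUB {a | WayBelow a b} b

/-- An `L`-fuzzy monotonic predicate on `D`: an antitone map sending directed
suprema in `D` to infima in `L` (i.e. a Scott-continuous map `D → Lᵒᵖ`). -/
def IsMonPred [Preorder D] [CompleteLattice L] (m : D → L) : Prop :=
  Antitone m ∧ ∀ S : Set D, S.Nonempty → DirectedOn (· ≤ ·) S →
    ∀ s : D, IsLUB S s → m s = ⨅ c ∈ S, m c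

/-- `η d₀` sends `d` to `1` if `d ≤ d₀` and to `0` otherwise. -/
noncomputable def eta [Preorder D] (L : Type*) [CompleteLattice L] (d₀ : D) : D → L :=
  fun d => if d ≤ d₀ then ⊤ else ⊥

/-- `f^u b = ⨅ { f a ∣ a ≪ b }`, the monotonic-predicate hull. -/
noncomputable def uHull [Preorder D] [CompleteLattice L] (f : D → L) : D → L :=
  fun b => ⨅ a ∈ {a | WayBelow a b}, f a

lemma wb_le' [Preorder D] {a b : D} (h : WayBelow a b) : a ≤ b := by
  obtain ⟨c, hc, hac⟩ := h {b} ⟨b, rfl⟩ (directedOn_singleton b) b isLUB_singleton le_rfl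
  rcases hc with rfl
  exact hac

lemma wb_mono' [Preorder D] {a' a b b' : D} (h1 : a' ≤ a) (h : WayBelow a b) (h2 : b ≤ b') :
    WayBelow a' b' := by
  intro S hS hdir s hs hbs
  obtain ⟨c, hc, hac⟩ := h S hS hdir s hs (h2.trans hbs)
  exact ⟨c, hc, h1.trans hac⟩

lemma wb_nonempty [Preorder D] (hD : IsFuzzyDomain D) (b : D) :
    {a | WayBelow a b}.Nonempty := by
  rcases Set.eq_empty_or_nonempty {a | WayBelow a b} with h | h
  · have hlub := (hD.2 b).2
    rw [h] at hlub
    have hleast : ∀ x : D, b ≤ x := fun x => hlub.2 (by simp [upperBounds])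
    have : WayBelow b b := by
      intro S hS _ s _ _
      obtain ⟨s0, hs0⟩ := hS
      exact ⟨s0, hs0, hleast s0⟩
    exact absurd (h ▸ this : b ∈ (∅ : Set D)) (Set.notMem_empty b)
  · exact h

lemma wb_interpolate [Preorder D] (hD : IsFuzzyDomain D) {a b : D} (hab : WayBelow a b) :
    ∃ c, WayBelow a c ∧ WayBelow c b := by
  set S : Set D := {d | ∃ c, WayBelow d c ∧ WayBelow c b} with hSdef
  have hne : S.Nonempty := by
    obtain ⟨c, hc⟩ := wb_nonempty hD b
    obtain ⟨d, hd⟩ := wb_nonempty hD c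
    exact ⟨d, c, hd, hc⟩
  have hdir : DirectedOn (· ≤ ·) S := by
    rintro d₁ ⟨c₁, hd₁, hc₁⟩ d₂ ⟨c₂, hd₂, hc₂⟩
    obtain ⟨c, hc, hc₁c, hc₂c⟩ := (hD.2 b).1 c₁ hc₁ c₂ hc₂
    have hd₁c : WayBelow d₁ c := wb_mono' le_rfl hd₁ hc₁c
    have hd₂c : WayBelow d₂ c := wb_mono' le_rfl hd₂ hc₂c
    obtain ⟨d, hd, h1, h2⟩ := (hD.2 c).1 d₁ hd₁c d₂ hd₂c
    exact ⟨d, ⟨c, hd, hc⟩, h1, h2⟩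
  have hlub : IsLUB S b := by
    constructor
    · rintro d ⟨c, hd, hc⟩
      exact (wb_le' hd).trans (wb_le' hc)
    · intro u hu
      refine (hD.2 b).2.2 ?_
      rintro c hc
      refine (hD.2 c).2.2 ?_
      rintro d hd
      exact hu ⟨c, hd, hc⟩
  obtain ⟨d, ⟨c, hdc, hcb⟩, had⟩ := hab S hne hdir b hlub le_rfl
  exact ⟨c, wb_mono' had hdc le_rfl, hcb⟩

theorem stmt_10 [PartialOrder D] [CompleteLattice L]
    (hD : IsFuzzyDomain D) {ι : Type*} (f : ι → D → L) (hf : ∀ i, Antitone (f i)) :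
    uHull (fun b => ⨆ i, f i b) = uHull (fun b => ⨆ i, uHull (f i) b) := by
  funext b
  apply le_antisymm
  · -- pointwise: f i a ≤ uHull (f i) a
    refine le_iInf₂ fun a ha => ?_
    refine (iInf₂_le a ha).trans ?_
    refine iSup_mono fun i => ?_
    exact le_iInf₂ fun a' ha' => hf i (wb_le' ha')
  · refine le_iInf₂ fun a ha => ?_
    obtain ⟨c, hac, hcb⟩ := wb_interpolate hD ha
    refine iInf₂_le_of_le c hcb ?_
    refine iSup_mono fun i => ?_
    exact iInf₂_le_of_le a hac le_rfl
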